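/- arXiv:1403.4793 — 3 statements merged into one kernel-verified Lean document; each statement's English description precedes it below -/
import Mathlib

section
/- The polynomials ψ_g with g ∈ G_{k,n,D} are all nonzero, are ℂ-linearly independent, and generate the power ideal I_{n,k,d}; in particular they form a minimal generating set of I_{n,k,d}. -/
/-!
Scaling `x_l ↦ ξ^{g_l} x_l` multiplies `ψ_h` by the character value `χ_g(h) = ξ^{Σ g_l h_l}`,
so `(x₀ + ⋯ + xₙ)^D = Σ_h ψ_h` turns into the discrete Fourier expansion `φ_g = Σ_h χ_g(h) ψ_h`.
Moreover `ψ_h ≠ 0` exactly for `h ∈ G_{k,n,D}`, and such an `h` is determined by `h₁, …, hₙ`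
since `h₀ ≡ D − h₁ − ⋯ − hₙ (mod k)`. Hence Fourier inversion over the subgroup `g₀ = 0` alone,
`Σ_{g₀ = 0} χ_g(−h) φ_g = kⁿ ψ_h`, recovers every `ψ_h` from the generators `φ_g`.
Distinct `ψ_h` have disjoint monomial supports, which gives linear independence.
-/

open MvPolynomial

/-- The weight of a vector `g ∈ (ℤ/kℤ)^m`: the sum of the representatives of
its entries in `{0,…,k−1}`. -/
def wt {m k : ℕ} (g : Fin m → ZMod k) : ℕ := ∑ l, (g l).val

/-- `φ_g = (Σ_l ξ^{g_l} x_l)^D`. -/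
noncomputable def phi (n k D : ℕ) (ξ : ℂ) (g : Fin (n+1) → ZMod k) :
    MvPolynomial (Fin (n+1)) ℂ :=
  (∑ l, C (ξ ^ (g l).val) * X l) ^ D

/-- `ψ_g`, the multicyclic-degree-`g` component of `(x₀+…+xₙ)^D`. -/
noncomputable def psi (n k D : ℕ) (g : Fin (n+1) → ZMod k) :
    MvPolynomial (Fin (n+1)) ℂ :=
  ∑ a ∈ (Finset.Nat.antidiagonalTuple (n+1) D).filter
      (fun a => ∀ l, ((a l : ZMod k) = g l)),
    (Nat.multinomial Finset.univ a : ℂ) •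
      monomial (Finsupp.equivFunOnFinite.symm a) (1 : ℂ)

/-- The power ideal `I_{n,k,d}`, generated by the `k^n` forms
`(x₀+ξ^{g₁}x₁+…+ξ^{gₙ}xₙ)^{(k−1)d}`. -/
noncomputable def powerIdeal (n k d : ℕ) (ξ : ℂ) :
    Ideal (MvPolynomial (Fin (n+1)) ℂ) :=
  Ideal.span { p | ∃ g : Fin (n+1) → ZMod k, g 0 = 0 ∧ p = phi n k ((k-1)*d) ξ g }

section Weight

variable {k : ℕ} [NeZero k]

lemma natCast_wt {m : ℕ} (g : Fin m → ZMod k) : (wt g : ZMod k) = ∑ l, g l := by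
  simp [wt, ZMod.natCast_val]

lemma exists_eq_wt_add_mul_iff {m D : ℕ} {g : Fin (m+1) → ZMod k} :
    (∃ j : ℕ, D = wt g + k * j) ↔
      ∃ b : Fin (m+1) → ℕ, ∑ l, b l = D ∧ ∀ l, (b l : ZMod k) = g l := by
  constructor
  · rintro ⟨j, rfl⟩
    refine ⟨fun l => (g l).val + if l = 0 then k * j else 0, ?_, fun l => ?_⟩
    · simp [Finset.sum_add_distrib, wt]
    · by_cases hl : l = 0 <;> simp [hl]
  · rintro ⟨b, rfl, hb⟩
    refine ⟨∑ l, b l / k, ?_⟩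
    rw [wt, Finset.mul_sum, ← Finset.sum_add_distrib]
    refine Finset.sum_congr rfl fun l _ => ?_
    rw [← hb l, ZMod.val_natCast, Nat.mod_add_div]

lemma natCast_eq_sum_of_eq_wt_add_mul {m D : ℕ} {g : Fin m → ZMod k}
    (hg : ∃ j : ℕ, D = wt g + k * j) : (D : ZMod k) = ∑ l, g l := by
  obtain ⟨j, rfl⟩ := hg
  simp [natCast_wt]

lemma eq_of_tail_eq_of_eq_wt_add_mul {m D : ℕ} {g h : Fin (m+1) → ZMod k}
    (hg : ∃ j : ℕ, D = wt g + k * j) (hh : ∃ j : ℕ, D = wt h + k * j)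
    (htail : Fin.tail g = Fin.tail h) : g = h := by
  have hsucc : ∀ i : Fin m, g i.succ = h i.succ := congrFun htail
  have hsum := (natCast_eq_sum_of_eq_wt_add_mul hg).symm.trans
    (natCast_eq_sum_of_eq_wt_add_mul hh)
  simp only [Fin.sum_univ_succ, hsucc] at hsum
  exact funext (Fin.cases (add_right_cancel hsum) hsucc)

end Weight

section Psi

variable {n k D : ℕ}

lemma coeff_psi (g : Fin (n+1) → ZMod k) (b : Fin (n+1) → ℕ) :
    coeff (Finsupp.equivFunOnFinite.symm b) (psi n k D g) =
      if (∑ l, b l) = D ∧ (∀ l, ((b l : ZMod k) = g l)) then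
        (Nat.multinomial Finset.univ b : ℂ) else 0 := by
  classical
  simp only [psi, coeff_sum, coeff_smul, coeff_monomial, EquivLike.apply_eq_iff_eq, smul_eq_mul,
    mul_ite, mul_one, mul_zero, Finset.sum_ite_eq', Finset.mem_filter,
    Finset.Nat.mem_antidiagonalTuple]

variable [NeZero k]

lemma psi_eq_zero_iff {g : Fin (n+1) → ZMod k} :
    psi n k D g = 0 ↔ ¬ ∃ j : ℕ, D = wt g + k * j := by
  rw [exists_eq_wt_add_mul_iff]
  constructor
  · rintro h0 ⟨b, hb⟩
    have := congrArg (coeff (Finsupp.equivFunOnFinite.symm b)) h0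
    rw [coeff_psi, if_pos hb, coeff_zero, Nat.cast_eq_zero] at this
    exact (Nat.multinomial_pos _ _).ne' this
  · intro hg
    refine Finset.sum_eq_zero fun a ha => absurd ⟨a, ?_⟩ hg
    simpa [Finset.Nat.mem_antidiagonalTuple] using ha

lemma linearIndependent_psi :
    LinearIndependent ℂ (fun g : {g : Fin (n+1) → ZMod k // ∃ j : ℕ, D = wt g + k * j} =>
      psi n k D g.1) := by
  choose b hb using fun g : {g : Fin (n+1) → ZMod k // ∃ j : ℕ, D = wt g + k * j} =>
    exists_eq_wt_add_mul_iff.1 g.2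
  have hmult : ∀ g, (Nat.multinomial Finset.univ (b g) : ℂ) ≠ 0 := fun g =>
    Nat.cast_ne_zero.2 (Nat.multinomial_pos _ _).ne'
  refine .of_pairwise_dual_eq_zero_one _ (fun g => (Nat.multinomial Finset.univ (b g) : ℂ)⁻¹ •
    lcoeff ℂ (Finsupp.equivFunOnFinite.symm (b g))) (fun g h hgh => ?_) (fun g => ?_)
  · have hne : ¬ ((∑ l, b g l) = D ∧ ∀ l, (b g l : ZMod k) = h.1 l) := fun hbh =>
      hgh (Subtype.ext (funext fun l => ((hb g).2 l).symm.trans (hbh.2 l)))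
    simp [coeff_psi, hne]
  · simp [coeff_psi, hb g, hmult g]

end Psi

section Pairing

variable {k m : ℕ}

def charPairing {M : Type*} [CommMonoid M] (ξ : M) (g h : Fin m → ZMod k) : M :=
  ∏ l, ξ ^ ((g l).val * (h l).val)

section CommMonoid

variable {M : Type*} [CommMonoid M] {ξ : M}

lemma charPairing_add_right [NeZero k] (hξ : ξ ^ k = 1) (g h h' : Fin m → ZMod k) :
    charPairing ξ g (h + h') = charPairing ξ g h * charPairing ξ g h' := by
  simp only [charPairing, ← Finset.prod_mul_distrib, ← pow_add, Pi.add_apply]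
  refine Finset.prod_congr rfl fun l _ => ?_
  have hξl : (ξ ^ (g l).val) ^ k = 1 := by rw [pow_right_comm, hξ, one_pow]
  rw [← mul_add, pow_mul, pow_mul, ZMod.val_add, ← pow_eq_pow_mod _ hξl]

lemma prod_pow_pow_eq_charPairing (hξ : ξ ^ k = 1) (g h : Fin m → ZMod k) {a : Fin m → ℕ}
    (ha : ∀ l, (a l : ZMod k) = h l) :
    ∏ l, (ξ ^ (g l).val) ^ a l = charPairing ξ g h := by
  refine Finset.prod_congr rfl fun l _ => ?_
  have hξl : (ξ ^ (g l).val) ^ k = 1 := by rw [pow_right_comm, hξ, one_pow]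
  rw [pow_mul, ← ha l, ZMod.val_natCast, ← pow_eq_pow_mod _ hξl]

lemma charPairing_cons_zero (g : Fin m → ZMod k) (h : Fin (m+1) → ZMod k) :
    charPairing ξ (Fin.cons 0 g) h = charPairing ξ g (Fin.tail h) := by
  simp [charPairing, Fin.prod_univ_succ, Fin.tail]

end CommMonoid

variable {K : Type*} [Field K] {ξ : K}

lemma IsPrimitiveRoot.sum_pow_val_mul_val [NeZero k] (hξ : IsPrimitiveRoot ξ k) (c : ZMod k) :
    ∑ t : ZMod k, ξ ^ (t.val * c.val) = if c = 0 then (k : K) else 0 := by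
  have hrange : ∑ t : ZMod k, ξ ^ (t.val * c.val) = ∑ i ∈ Finset.range k, (ξ ^ c.val) ^ i :=
    Finset.sum_nbij' ZMod.val Nat.cast (fun t _ => Finset.mem_range.2 (ZMod.val_lt t))
      (fun _ _ => Finset.mem_univ _) (fun t _ => ZMod.natCast_zmod_val t)
      (fun i hi => ZMod.val_cast_of_lt (Finset.mem_range.1 hi))
      (fun t _ => by rw [← pow_mul, mul_comm])
  rw [hrange]
  split_ifs with hc
  · simp [hc]
  · have hne : ξ ^ c.val ≠ 1 :=
      hξ.pow_ne_one_of_pos_of_lt ((ZMod.val_ne_zero c).2 hc) (ZMod.val_lt c)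
    have hpow : (ξ ^ c.val) ^ k = 1 := by rw [pow_right_comm, hξ.pow_eq_one, one_pow]
    rw [geom_sum_eq hne, hpow, sub_self, zero_div]

lemma IsPrimitiveRoot.sum_charPairing [NeZero k] (hξ : IsPrimitiveRoot ξ k)
    (c : Fin m → ZMod k) :
    ∑ g, charPairing ξ g c = if c = 0 then (k : K) ^ m else 0 := by
  simp only [charPairing]
  rw [← Fintype.prod_sum (fun l (t : ZMod k) => ξ ^ (t.val * (c l).val))]
  simp only [hξ.sum_pow_val_mul_val, Finset.prod_ite_zero, funext_iff, Pi.zero_apply,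
    Finset.prod_const, Finset.card_univ, Fintype.card_fin, Finset.mem_univ, true_imp_iff]

end Pairing

section Expansion

variable {n k D : ℕ}

lemma aeval_psi {ξ : ℂ} (hξ : ξ ^ k = 1) (g h : Fin (n+1) → ZMod k) :
    aeval (fun l => C (ξ ^ (g l).val) * X l) (psi n k D h) =
      C (charPairing ξ g h) * psi n k D h := by
  simp only [psi, map_sum, map_smul, Finset.mul_sum, mul_smul_comm]
  refine Finset.sum_congr rfl fun a ha => ?_
  rw [aeval_monomial, map_one, one_mul, Finsupp.prod_fintype _ _ (fun _ => pow_zero _),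
    monomial_eq, Finsupp.prod_pow, C_1, one_mul,
    ← prod_pow_pow_eq_charPairing hξ g h (Finset.mem_filter.1 ha).2, map_prod,
    ← Finset.prod_mul_distrib]
  simp [mul_pow]

variable [NeZero k]

lemma sum_psi : ∑ h, psi n k D h = (∑ l, X l) ^ D := by
  classical
  symm
  rw [Finset.sum_pow_eq_sum_piAntidiag, Finset.piAntidiag_univ_fin_eq_antidiagonalTuple,
    ← Finset.sum_fiberwise (Finset.Nat.antidiagonalTuple (n+1) D) (fun a l => (a l : ZMod k))]
  refine Fintype.sum_congr _ _ fun h => Finset.sum_congr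
    (Finset.filter_congr fun a _ => by simp [funext_iff]) fun a _ => ?_
  rw [monomial_eq, Finsupp.prod_pow, C_1, one_mul, smul_eq_C_mul, map_natCast]
  rfl

lemma phi_eq_sum_charPairing_mul_psi {ξ : ℂ} (hξ : ξ ^ k = 1) (g : Fin (n+1) → ZMod k) :
    phi n k D ξ g = ∑ h, C (charPairing ξ g h) * psi n k D h := by
  have hphi : phi n k D ξ g = aeval (fun l => C (ξ ^ (g l).val) * X l)
      ((∑ l, X l : MvPolynomial (Fin (n+1)) ℂ) ^ D) := by
    simp [phi]
  rw [hphi, ← sum_psi (k := k), map_sum]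
  exact Fintype.sum_congr _ _ fun h => aeval_psi hξ g h

end Expansion

section Inversion

variable {n k D : ℕ} [NeZero k] {ξ : ℂ}

lemma sum_charPairing_neg_mul_phi (hξ : IsPrimitiveRoot ξ k) {h : Fin (n+1) → ZMod k}
    (hh : ∃ j : ℕ, D = wt h + k * j) :
    ∑ g : Fin n → ZMod k, C (charPairing ξ (Fin.cons 0 g) (-h)) * phi n k D ξ (Fin.cons 0 g)
      = C ((k : ℂ) ^ n) * psi n k D h := by
  have horth : ∀ h' : Fin (n+1) → ZMod k,
      ∑ g : Fin n → ZMod k, charPairing ξ (Fin.cons 0 g) (-h + h') =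
        if Fin.tail h' = Fin.tail h then (k : ℂ) ^ n else 0 := by
    intro h'
    simp only [charPairing_cons_zero, hξ.sum_charPairing]
    rw [show Fin.tail (-h + h') = -Fin.tail h + Fin.tail h' from rfl]
    simp only [neg_add_eq_zero, eq_comm]
  calc ∑ g : Fin n → ZMod k, C (charPairing ξ (Fin.cons 0 g) (-h)) * phi n k D ξ (Fin.cons 0 g)
      = ∑ h', C (∑ g : Fin n → ZMod k, charPairing ξ (Fin.cons 0 g) (-h + h')) *
          psi n k D h' := by
        simp only [phi_eq_sum_charPairing_mul_psi hξ.pow_eq_one, Finset.mul_sum, ← mul_assoc,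
          ← map_mul, ← charPairing_add_right hξ.pow_eq_one, map_sum, Finset.sum_mul]
        exact Finset.sum_comm
    _ = C ((k : ℂ) ^ n) * psi n k D h := by
        rw [Finset.sum_eq_single h]
        · rw [horth, if_pos rfl]
        · intro h' _ hne
          rw [horth]
          split_ifs with htail
          · rw [psi_eq_zero_iff.2 fun hh' => hne (eq_of_tail_eq_of_eq_wt_add_mul hh' hh htail),
              mul_zero]
          · rw [map_zero, zero_mul]
        · simp

end Inversion

section Span

variable {n k D : ℕ} [NeZero k] {ξ : ℂ}

lemma phi_mem_span_psi (hξ : ξ ^ k = 1) (g : Fin (n+1) → ZMod k) :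
    phi n k D ξ g ∈ Ideal.span
      {p | ∃ h : Fin (n+1) → ZMod k, (∃ j : ℕ, D = wt h + k * j) ∧ p = psi n k D h} := by
  rw [phi_eq_sum_charPairing_mul_psi hξ]
  refine Ideal.sum_mem _ fun h _ => ?_
  by_cases hh : ∃ j : ℕ, D = wt h + k * j
  · exact Ideal.mul_mem_left _ _ (Ideal.subset_span ⟨h, hh, rfl⟩)
  · rw [psi_eq_zero_iff.2 hh, mul_zero]
    exact Ideal.zero_mem _

lemma psi_mem_span_phi (hξ : IsPrimitiveRoot ξ k) {h : Fin (n+1) → ZMod k}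
    (hh : ∃ j : ℕ, D = wt h + k * j) :
    psi n k D h ∈ Ideal.span
      {p | ∃ g : Fin (n+1) → ZMod k, g 0 = 0 ∧ p = phi n k D ξ g} := by
  have hkn : (k : ℂ) ^ n ≠ 0 := pow_ne_zero _ (Nat.cast_ne_zero.2 (NeZero.ne k))
  have hpsi : psi n k D h = C ((k : ℂ) ^ n)⁻¹ *
      ∑ g : Fin n → ZMod k, C (charPairing ξ (Fin.cons 0 g) (-h)) * phi n k D ξ (Fin.cons 0 g) := by
    rw [sum_charPairing_neg_mul_phi hξ hh, ← mul_assoc, ← map_mul, inv_mul_cancel₀ hkn, map_one,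
      one_mul]
  rw [hpsi]
  exact Ideal.mul_mem_left _ _ (Ideal.sum_mem _ fun g _ =>
    Ideal.mul_mem_left _ _ (Ideal.subset_span ⟨Fin.cons 0 g, Fin.cons_zero _ _, rfl⟩))

end Span

theorem stmt2_general (n k d : ℕ) (hk : 2 ≤ k) (ξ : ℂ)
    (hξ : IsPrimitiveRoot ξ k) (D : ℕ) (hD : D = (k-1)*d) :
    (∀ g : Fin (n+1) → ZMod k, (∃ j : ℕ, D = wt g + k * j) → psi n k D g ≠ 0) ∧
    (LinearIndependent ℂ
      (fun g : {g : Fin (n+1) → ZMod k // ∃ j : ℕ, D = wt g + k * j} =>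
        psi n k D g.1)) ∧
    Ideal.span { p | ∃ g : Fin (n+1) → ZMod k,
        (∃ j : ℕ, D = wt g + k * j) ∧ p = psi n k D g }
      = powerIdeal n k d ξ := by
  have : NeZero k := ⟨by omega⟩
  subst hD
  refine ⟨fun g hg => mt psi_eq_zero_iff.1 (not_not.2 hg), linearIndependent_psi,
    le_antisymm ?_ ?_⟩
  · rw [Ideal.span_le]
    rintro _ ⟨h, hh, rfl⟩
    exact psi_mem_span_phi hξ hh
  · rw [powerIdeal, Ideal.span_le]
    rintro _ ⟨g, -, rfl⟩
    exact phi_mem_span_psi hξ.pow_eq_one g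

theorem stmt2 (n k d : ℕ) (hk : 2 ≤ k) (hd : 1 ≤ d) (ξ : ℂ)
    (hξ : IsPrimitiveRoot ξ k) (D : ℕ) (hD : D = (k-1)*d) :
    (∀ g : Fin (n+1) → ZMod k, (∃ j : ℕ, D = wt g + k * j) → psi n k D g ≠ 0) ∧
    (LinearIndependent ℂ
      (fun g : {g : Fin (n+1) → ZMod k // ∃ j : ℕ, D = wt g + k * j} =>
        psi n k D g.1)) ∧
    Ideal.span { p | ∃ g : Fin (n+1) → ZMod k,
        (∃ j : ℕ, D = wt g + k * j) ∧ p = psi n k D g }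
      = powerIdeal n k d ξ :=
  stmt2_general n k d hk ξ hξ D hD
end

section
/- The cardinality of G_{k,n,D} equals Σ_{i ≥ 0} Σ_{ν₂,…,ν_{k−1} ≥ 0} (n+1)! / ( ν₂!···ν_{k−1}! · (D − ki − Σ_{j=2}^{k−1} j·ν_j)! · (n+1 − D + ki + Σ_{j=2}^{k−1} (j−1)ν_j)! ), where a summand is 0 whenever D − ki − Σ_{j=2}^{k−1} j·ν_j < 0 or n+1 − D + ki + Σ_{j=2}^{k−1} (j−1)ν_j < 0. In particular, for k = 2 (so D = d) the cardinality of G_{2,n,d} equals Σ_{i ≥ 0} C(n+1, d−2i). -/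
/-- `A = D − ki − Σ_{j=2}^{k−1} j·ν_j` (as an integer); here `ν : Fin (k-2) → ℕ`
encodes `(ν₂,…,ν_{k−1})` via `ν_j = ν ⟨j-2⟩`. -/
def Aval (k D i : ℕ) (ν : Fin (k-2) → ℕ) : ℤ :=
  (D : ℤ) - k * i - ∑ j : Fin (k-2), (((j : ℕ) : ℤ) + 2) * (ν j : ℤ)

/-- `B = n+1 − D + ki + Σ_{j=2}^{k−1} (j−1)·ν_j` (as an integer). -/
def Bval (n k D i : ℕ) (ν : Fin (k-2) → ℕ) : ℤ :=
  (n : ℤ) + 1 - D + k * i + ∑ j : Fin (k-2), (((j : ℕ) : ℤ) + 1) * (ν j : ℤ)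

/-- The summand `(n+1)! / (ν₂!···ν_{k−1}!·A!·B!)`, taken to be `0` when
`A < 0` or `B < 0`. -/
def summand (n k D i : ℕ) (ν : Fin (k-2) → ℕ) : ℕ :=
  if 0 ≤ Aval k D i ν ∧ 0 ≤ Bval n k D i ν then
    (n+1).factorial /
      ((∏ j, (ν j).factorial) * (Aval k D i ν).toNat.factorial *
        (Bval n k D i ν).toNat.factorial)
  else 0


open Finset

lemma aux_count {α β : Type*} [DecidableEq α] [DecidableEq β] [Fintype β] [Fintype α]
    (s : Finset α) : ∀ (u : Finset β) (c : α → ℕ),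
    (∀ a ∉ s, c a = 0) → (∑ a ∈ s, c a = u.card) →
    (univ.filter (fun f : β → Option α =>
        (∀ l, f l ≠ none ↔ l ∈ u) ∧ ∀ a, (u.filter (fun l => f l = some a)).card = c a)).card
      * ∏ a ∈ s, (c a).factorial = u.card.factorial := by
  induction s using Finset.induction with
  | empty =>
    intro u c hc hsum
    have hu : u = ∅ := card_eq_zero.mp (by simpa using hsum.symm)
    subst hu
    simp only [prod_empty, mul_one, card_empty, Nat.factorial_zero]
    rw [card_eq_one]
    refine ⟨fun _ => none, ?_⟩
    ext f
    simp only [mem_filter, mem_univ, true_and, mem_singleton, notMem_empty, iff_false,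
      filter_empty, card_empty]
    constructor
    · rintro ⟨h1, _⟩
      funext l
      have := h1 l
      simpa using this
    · rintro rfl
      exact ⟨fun l => by simp, fun a => (hc a (by simp)).symm⟩
  | @insert a s ha ih =>
    intro u c hc hsum
    rw [sum_insert ha] at hsum
    have hcale : c a ≤ u.card := by
      have : 0 ≤ ∑ b ∈ s, c b := Nat.zero_le _
      omega
    set F := univ.filter (fun f : β → Option α =>
        (∀ l, f l ≠ none ↔ l ∈ u) ∧ ∀ b, (u.filter (fun l => f l = some b)).card = c b) with hF
    have hmap : ∀ f ∈ F, u.filter (fun l => f l = some a) ∈ u.powersetCard (c a) := by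
      intro f hf
      simp only [hF, mem_filter, mem_univ, true_and] at hf
      exact mem_powersetCard.mpr ⟨filter_subset _ _, hf.2 a⟩
    rw [card_eq_sum_card_fiberwise hmap]
    have key : ∀ T ∈ u.powersetCard (c a),
        (F.filter (fun f => u.filter (fun l => f l = some a) = T)).card
          * ∏ b ∈ s, (c b).factorial = (u.card - c a).factorial := by
      intro T hT
      obtain ⟨hTu, hTcard⟩ := mem_powersetCard.mp hT
      have hprod : ∏ b ∈ s, (Function.update c a 0 b).factorial = ∏ b ∈ s, (c b).factorial := by
        refine prod_congr rfl fun b hb => ?_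
        rw [Function.update_of_ne (by rintro rfl; exact ha hb)]
      have hih := ih (u \ T) (Function.update c a 0)
        (by
          intro b hb
          by_cases hba : b = a
          · subst hba; simp
          · rw [Function.update_of_ne hba]
            exact hc b (by simp [hba, hb]))
        (by
          rw [card_sdiff_of_subset hTu, hTcard]
          rw [show ∑ b ∈ s, Function.update c a 0 b = ∑ b ∈ s, c b from
            Finset.sum_congr rfl fun b hb => by
              rw [Function.update_of_ne (by rintro rfl; exact ha hb)]]
          omega)
      rw [hprod] at hih
      rw [card_sdiff_of_subset hTu, hTcard] at hih
      rw [← hih]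
      congr 1
      -- bijection between F-fiber over T and the (u \ T)-set
      refine Finset.card_bij'
        (fun f _ => fun l => if l ∈ T then none else f l)
        (fun g _ => fun l => if l ∈ T then some a else g l) ?_ ?_ ?_ ?_
      · -- maps into target
        intro f hf
        simp only [mem_filter, mem_univ, true_and, hF] at hf ⊢
        obtain ⟨⟨hsupp, hcnt⟩, hfib⟩ := hf
        have hfa : ∀ l ∈ u, (f l = some a ↔ l ∈ T) := by
          intro l hl
          constructor
          · intro h; rw [← hfib]; simp [hl, h]
          · intro h; rw [← hfib] at h; simp only [mem_filter] at h; exact h.2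
        constructor
        · intro l
          by_cases hlT : l ∈ T
          · simp [hlT]
          · rw [if_neg hlT, mem_sdiff, ← hsupp l]
            simp [hlT]
        · intro b
          by_cases hba : b = a
          · subst hba
            rw [Function.update_self]
            rw [card_eq_zero, filter_eq_empty_iff]
            intro l hl
            simp only [mem_sdiff] at hl
            rw [if_neg hl.2]
            intro hfl
            exact hl.2 ((hfa l hl.1).mp hfl)
          · rw [Function.update_of_ne hba, ← hcnt b]
            congr 1
            ext l
            simp only [mem_filter, mem_sdiff]
            constructor
            · rintro ⟨⟨hlu, hlT⟩, hfl⟩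
              rw [if_neg hlT] at hfl
              exact ⟨hlu, hfl⟩
            · rintro ⟨hlu, hfl⟩
              have hlT : l ∉ T := by
                intro hlT
                exact hba (by
                  have := (hfa l hlu).mpr hlT
                  rw [hfl] at this
                  exact (Option.some_injective _ this).symm ▸ rfl)
              exact ⟨⟨hlu, hlT⟩, by rw [if_neg hlT]; exact hfl⟩
      · -- reverse maps into source
        intro g hg
        simp only [mem_filter, mem_univ, true_and, hF] at hg ⊢
        obtain ⟨hsupp, hcnt⟩ := hg
        have hga : ∀ l, g l ≠ some a := by
          intro l hl
          have h0 : ((u \ T).filter fun l => g l = some a).card = 0 := by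
            rw [hcnt a]; simp
          rw [card_eq_zero, filter_eq_empty_iff] at h0
          have hlu : l ∈ u \ T := (hsupp l).mp (by rw [hl]; simp)
          exact h0 hlu hl
        have hfib : (u.filter fun l => (if l ∈ T then some a else g l) = some a) = T := by
          ext l
          simp only [mem_filter]
          constructor
          · rintro ⟨hlu, hfl⟩
            by_contra hlT
            rw [if_neg hlT] at hfl
            exact hga l hfl
          · intro hlT
            exact ⟨hTu hlT, by rw [if_pos hlT]⟩
        refine ⟨⟨?_, ?_⟩, hfib⟩
        · intro l
          by_cases hlT : l ∈ T
          · simp [hlT, hTu hlT]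
          · rw [if_neg hlT, hsupp l]
            simp [hlT]
        · intro b
          by_cases hba : b = a
          · subst hba
            rw [hfib, hTcard]
          · have := hcnt b
            rw [Function.update_of_ne hba] at this
            rw [← this]
            congr 1
            ext l
            simp only [mem_filter, mem_sdiff]
            constructor
            · rintro ⟨hlu, hfl⟩
              have hlT : l ∉ T := by
                intro hlT
                rw [if_pos hlT] at hfl
                exact hba (Option.some_injective _ hfl).symm
              rw [if_neg hlT] at hfl
              exact ⟨⟨hlu, hlT⟩, hfl⟩
            · rintro ⟨⟨hlu, hlT⟩, hfl⟩
              exact ⟨hlu, by rw [if_neg hlT]; exact hfl⟩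
      · -- left inverse
        intro f hf
        simp only [mem_filter, mem_univ, true_and, hF] at hf
        obtain ⟨⟨hsupp, hcnt⟩, hfib⟩ := hf
        funext l
        by_cases hlT : l ∈ T
        · simp only [if_pos hlT]
          have : l ∈ u.filter fun l => f l = some a := hfib ▸ hlT
          simp only [mem_filter] at this
          exact this.2.symm
        · simp [hlT]
      · -- right inverse
        intro g hg
        funext l
        by_cases hlT : l ∈ T
        · simp only [mem_filter, mem_univ, true_and, hF] at hg
          simp only [if_pos hlT]
          symm
          by_contra hne
          have : g l ≠ none := hne
          have hlu : l ∈ u \ T := (hg.1 l).mp hne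
          simp only [mem_sdiff] at hlu
          exact hlu.2 hlT
        · simp [hlT]
    rw [prod_insert ha]
    calc (∑ T ∈ u.powersetCard (c a),
            (F.filter (fun f => u.filter (fun l => f l = some a) = T)).card)
          * ((c a).factorial * ∏ b ∈ s, (c b).factorial)
        = ∑ T ∈ u.powersetCard (c a),
            ((F.filter (fun f => u.filter (fun l => f l = some a) = T)).card
              * ∏ b ∈ s, (c b).factorial) * (c a).factorial := by
          rw [sum_mul]; exact Finset.sum_congr rfl fun T hT => by ring
      _ = ∑ T ∈ u.powersetCard (c a), (u.card - c a).factorial * (c a).factorial := by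
          exact Finset.sum_congr rfl fun T hT => by rw [key T hT]
      _ = u.card.choose (c a) * ((u.card - c a).factorial * (c a).factorial) := by
          rw [sum_const, card_powersetCard, smul_eq_mul]
      _ = u.card.factorial := by
          rw [← Nat.choose_mul_factorial_mul_factorial hcale]; ring

lemma card_counts {α β : Type*} [DecidableEq α] [DecidableEq β] [Fintype β] [Fintype α]
    (c : α → ℕ) (hsum : ∑ a, c a = Fintype.card β) :
    (univ.filter (fun f : β → α => ∀ a, (univ.filter (fun l => f l = a)).card = c a)).card
      * ∏ a, (c a).factorial = (Fintype.card β).factorial := by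
  have := aux_count (univ : Finset α) (univ : Finset β) c (by simp) (by simpa using hsum)
  rw [card_univ] at this
  rw [← this]
  congr 1
  refine Finset.card_bij' (fun f _ => fun l => some (f l))
    (fun g hg => fun l => (g l).get (by
      simp only [mem_filter, mem_univ, true_and] at hg
      have := (hg.1 l).mpr trivial
      exact Option.ne_none_iff_isSome.mp this)) ?_ ?_ ?_ ?_
  · intro f hf
    simp only [mem_filter, mem_univ, true_and] at hf ⊢
    refine ⟨fun l => by simp, fun a => ?_⟩
    rw [← hf a]
    congr 1
    ext l
    simp
  · intro g hg
    simp only [mem_filter, mem_univ, true_and] at hg ⊢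
    intro a
    rw [← hg.2 a]
    congr 1
    ext l
    simp only [mem_filter, mem_univ, true_and]
    constructor
    · rintro rfl
      exact (Option.some_get _).symm
    · intro h
      simp [h]
  · intro f hf; funext l; simp
  · intro g hg; funext l; simp



def zmodEquiv (k : ℕ) [NeZero k] : Fin k ≃ ZMod k where
  toFun x := ((x : ℕ) : ZMod k)
  invFun v := ⟨v.val, ZMod.val_lt v⟩
  left_inv x := Fin.ext (ZMod.val_cast_of_lt x.isLt)
  right_inv v := ZMod.natCast_rightInverse v

@[simp] lemma zmodEquiv_apply (k : ℕ) [NeZero k] (x : Fin k) :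
    zmodEquiv k x = ((x : ℕ) : ZMod k) := rfl

lemma zmod_prod_split {M : Type*} [CommMonoid M] {k : ℕ} [NeZero k] (hk : 2 ≤ k)
    (g : ZMod k → M) :
    ∏ v : ZMod k, g v = g 0 * g 1 * ∏ j : Fin (k-2), g (((j:ℕ)+2 : ℕ) : ZMod k) := by
  obtain ⟨m, rfl⟩ : ∃ m, k = m + 2 := ⟨k - 2, by omega⟩
  rw [← Equiv.prod_comp (zmodEquiv (m+2)) g]
  rw [Fin.prod_univ_succ, Fin.prod_univ_succ]
  show g ((zmodEquiv (m+2)) 0) * (g ((zmodEquiv (m+2)) (Fin.succ 0)) *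
      ∏ j : Fin m, g ((zmodEquiv (m+2)) j.succ.succ))
    = g 0 * g 1 * ∏ j : Fin m, g (((j:ℕ)+2 : ℕ) : ZMod (m+2))
  have e0 : (zmodEquiv (m+2)) 0 = (0 : ZMod (m+2)) := by simp
  have e1 : (zmodEquiv (m+2)) (Fin.succ 0) = (1 : ZMod (m+2)) := by
    simp [zmodEquiv_apply, Fin.val_succ]
  have e2 : (∏ j : Fin m, g ((zmodEquiv (m+2)) j.succ.succ))
      = ∏ j : Fin m, g (((j:ℕ)+2 : ℕ) : ZMod (m+2)) :=
    Finset.prod_congr rfl fun j _ => by simp only [zmodEquiv_apply, Fin.val_succ]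
  rw [e0, e1, e2, mul_assoc]

lemma zmod_sum_split {M : Type*} [AddCommMonoid M] {k : ℕ} [NeZero k] (hk : 2 ≤ k)
    (g : ZMod k → M) :
    ∑ v : ZMod k, g v = g 0 + g 1 + ∑ j : Fin (k-2), g (((j:ℕ)+2 : ℕ) : ZMod k) := by
  obtain ⟨m, rfl⟩ : ∃ m, k = m + 2 := ⟨k - 2, by omega⟩
  rw [← Equiv.sum_comp (zmodEquiv (m+2)) g]
  rw [Fin.sum_univ_succ, Fin.sum_univ_succ]
  show g ((zmodEquiv (m+2)) 0) + (g ((zmodEquiv (m+2)) (Fin.succ 0)) +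
      ∑ j : Fin m, g ((zmodEquiv (m+2)) j.succ.succ))
    = g 0 + g 1 + ∑ j : Fin m, g (((j:ℕ)+2 : ℕ) : ZMod (m+2))
  have e0 : (zmodEquiv (m+2)) 0 = (0 : ZMod (m+2)) := by simp
  have e1 : (zmodEquiv (m+2)) (Fin.succ 0) = (1 : ZMod (m+2)) := by
    simp [zmodEquiv_apply, Fin.val_succ]
  have e2 : (∑ j : Fin m, g ((zmodEquiv (m+2)) j.succ.succ))
      = ∑ j : Fin m, g (((j:ℕ)+2 : ℕ) : ZMod (m+2)) :=
    Finset.sum_congr rfl fun j _ => by simp only [zmodEquiv_apply, Fin.val_succ]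
  rw [e0, e1, e2, add_assoc]

def cnt {n k : ℕ} (h : Fin (n+1) → ZMod k) (v : ZMod k) : ℕ :=
  (Finset.univ.filter (fun l => h l = v)).card

lemma cnt_sum {n k : ℕ} [NeZero k] (h : Fin (n+1) → ZMod k) :
    ∑ v : ZMod k, cnt h v = n + 1 := by
  unfold cnt
  rw [← Finset.card_eq_sum_card_fiberwise (fun l _ => mem_univ (h l))]
  simp

lemma wt_eq {n k : ℕ} [NeZero k] (h : Fin (n+1) → ZMod k) :
    wt h = ∑ v : ZMod k, v.val * cnt h v := by
  unfold wt cnt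
  rw [← Finset.sum_fiberwise univ h (fun l => (h l).val)]
  refine Finset.sum_congr rfl fun v _ => ?_
  rw [Finset.sum_congr rfl (fun l hl => ?_), Finset.sum_const, smul_eq_mul, mul_comm]
  simp only [mem_filter] at hl
  rw [hl.2]

def Phi (n k D : ℕ) [NeZero k] (h : Fin (n+1) → ZMod k) : ℕ × (Fin (k-2) → ℕ) :=
  ((D - wt h)/k, fun j => cnt h (((j:ℕ)+2 : ℕ) : ZMod k))

lemma val_cast_add_two {k : ℕ} [NeZero k] (j : Fin (k-2)) :
    ((((j:ℕ)+2 : ℕ) : ZMod k)).val = (j:ℕ) + 2 :=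
  ZMod.val_cast_of_lt (by have := j.isLt; omega)

open scoped Classical in
lemma fiber_card (n k D : ℕ) [NeZero k] (hk : 2 ≤ k) (i : ℕ) (ν : Fin (k-2) → ℕ) :
    (((Finset.univ : Finset (Fin (n+1) → ZMod k)).filter
        (fun h => ∃ j : ℕ, D = wt h + k * j)).filter
      (fun h => Phi n k D h = (i, ν))).card = summand n k D i ν := by
  have hk0 : 0 < k := by omega
  haveI : Fact (1 < k) := ⟨by omega⟩
  set At := (Aval k D i ν).toNat with hAt
  set Bt := (Bval n k D i ν).toNat with hBt
  set S2 := ∑ j : Fin (k-2), ((j:ℕ)+2) * ν j with hS2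
  set S1 := ∑ j : Fin (k-2), ((j:ℕ)+1) * ν j with hS1
  set S0 := ∑ j : Fin (k-2), ν j with hS0
  have hS210 : S2 = S1 + S0 := by
    rw [hS2, hS1, hS0, ← Finset.sum_add_distrib]
    exact Finset.sum_congr rfl fun j _ => by ring
  have hA : Aval k D i ν = (D:ℤ) - ((k*i : ℕ) : ℤ) - (S2 : ℤ) := by
    rw [Aval, hS2]; push_cast; ring
  have hB : Bval n k D i ν = (n:ℤ) + 1 - D + ((k*i : ℕ) : ℤ) + (S1 : ℤ) := by
    rw [Bval, hS1]; push_cast; ring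
  -- the prescribed count function
  set c : ZMod k → ℕ := fun v =>
    if h0 : v.val = 0 then Bt else if h1 : v.val = 1 then At
    else ν ⟨v.val - 2, by have := ZMod.val_lt v; omega⟩ with hc
  have hc0 : c 0 = Bt := by simp [hc, ZMod.val_zero]
  have hc1 : c 1 = At := by
    simp [hc, ZMod.val_one k]
  have hc2 : ∀ j : Fin (k-2), c (((j:ℕ)+2 : ℕ) : ZMod k) = ν j := by
    intro j
    simp only [hc, val_cast_add_two]
    rw [dif_neg (by omega), dif_neg (by omega)]
    exact congrArg ν (Fin.ext rfl)
  -- facts about any h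
  have hcsum : ∀ h : Fin (n+1) → ZMod k,
      cnt h 0 + cnt h 1 + ∑ j : Fin (k-2), cnt h (((j:ℕ)+2 : ℕ) : ZMod k) = n + 1 := by
    intro h
    rw [← zmod_sum_split hk (cnt h), cnt_sum]
  have hwteq : ∀ h : Fin (n+1) → ZMod k,
      wt h = cnt h 1 + ∑ j : Fin (k-2), ((j:ℕ)+2) * cnt h (((j:ℕ)+2 : ℕ) : ZMod k) := by
    intro h
    rw [wt_eq h, zmod_sum_split hk (fun v => v.val * cnt h v)]
    rw [ZMod.val_zero, ZMod.val_one k]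
    simp only [zero_mul, one_mul, zero_add]
    congr 1
    exact Finset.sum_congr rfl fun j _ => by rw [val_cast_add_two]
  -- key forward computation
  have key : ∀ h : Fin (n+1) → ZMod k, (∃ j : ℕ, D = wt h + k * j) →
      Phi n k D h = (i, ν) →
      ((cnt h 1 : ℤ) = Aval k D i ν ∧ (cnt h 0 : ℤ) = Bval n k D i ν ∧ wt h + k * i = D) := by
    intro h ⟨j, hj⟩ hPhi
    rw [Phi, Prod.mk.injEq] at hPhi
    obtain ⟨hdiv, hν⟩ := hPhi
    have hij : i = j := by
      rw [← hdiv, hj]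
      rw [Nat.add_sub_cancel_left, Nat.mul_div_cancel_left j hk0]
    subst hij
    have hwD : wt h + k * i = D := hj.symm
    have hcnts : ∀ j' : Fin (k-2), cnt h (((j':ℕ)+2 : ℕ) : ZMod k) = ν j' := by
      intro j'
      exact congrFun hν j'
    have h1 : cnt h 0 + cnt h 1 + S0 = n + 1 := by
      rw [← hcsum h, hS0]
      congr 1
      exact Finset.sum_congr rfl fun j' _ => (hcnts j').symm
    have h2 : wt h = cnt h 1 + S2 := by
      rw [hwteq h, hS2]
      congr 1
      exact Finset.sum_congr rfl fun j' _ => by rw [hcnts j']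
    refine ⟨?_, ?_, hwD⟩
    · rw [hA]
      have := hwD; have := h2
      omega
    · rw [hB]
      omega
  by_cases hAB : 0 ≤ Aval k D i ν ∧ 0 ≤ Bval n k D i ν
  · -- the fiber equals the counts set
    have hset : ((Finset.univ : Finset (Fin (n+1) → ZMod k)).filter
          (fun h => ∃ j : ℕ, D = wt h + k * j)).filter
            (fun h => Phi n k D h = (i, ν))
        = Finset.univ.filter
            (fun h : Fin (n+1) → ZMod k =>
              ∀ v, (Finset.univ.filter (fun l => h l = v)).card = c v) := by
      ext h
      simp only [mem_filter, mem_univ, true_and]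
      constructor
      · rintro ⟨hex, hPhi⟩
        obtain ⟨h1A, h0B, hwD⟩ := key h hex hPhi
        rw [Phi, Prod.mk.injEq] at hPhi
        obtain ⟨hdiv, hν⟩ := hPhi
        intro v
        show cnt h v = c v
        rcases Nat.lt_or_ge v.val 2 with hv | hv
        · rcases Nat.lt_or_ge v.val 1 with hv0 | hv1
          · have hv0' : v.val = 0 := by omega
            have : v = 0 := (ZMod.val_eq_zero v).mp hv0'
            subst this
            rw [hc0]
            omega
          · have hv1' : v.val = 1 := by omega
            have : v = 1 := by
              have := ZMod.natCast_rightInverse (n := k) v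
              rw [← this, hv1', Nat.cast_one]
            subst this
            rw [hc1]
            omega
        · have hvlt := ZMod.val_lt v
          set j0 : Fin (k-2) := ⟨v.val - 2, by omega⟩ with hj0
          have hvj : (((j0:ℕ)+2 : ℕ) : ZMod k) = v := by
            have : (j0:ℕ) + 2 = v.val := by simp [hj0]; omega
            rw [this]
            exact ZMod.natCast_rightInverse v
          have := congrFun hν j0
          show cnt h v = c v
          rw [← hvj]
          rw [hc2 j0]
          exact this
      · intro hcv
        have hcnt2 : ∀ j' : Fin (k-2), cnt h (((j':ℕ)+2 : ℕ) : ZMod k) = ν j' := by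
          intro j'
          have := hcv ((((j':ℕ)+2 : ℕ) : ZMod k))
          rw [hc2 j'] at this
          exact this
        have h1c : cnt h 1 = At := by
          have := hcv 1; rw [hc1] at this; exact this
        have h2 : wt h = cnt h 1 + S2 := by
          rw [hwteq h, hS2]
          congr 1
          exact Finset.sum_congr rfl fun j' _ => by rw [hcnt2 j']
        have hwD : wt h + k * i = D := by
          have hA' := hA
          have hApos := hAB.1
          omega
        constructor
        · exact ⟨i, hwD.symm⟩
        · rw [Phi, Prod.mk.injEq]
          constructor
          · rw [show D - wt h = k * i by omega, Nat.mul_div_cancel_left i hk0]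
          · funext j'
            exact hcnt2 j'
    rw [hset]
    have hsum' : ∑ v : ZMod k, c v = Fintype.card (Fin (n+1)) := by
      rw [zmod_sum_split hk c, hc0, hc1, Fintype.card_fin]
      rw [show (∑ j : Fin (k-2), c (((j:ℕ)+2 : ℕ) : ZMod k)) = S0 from
        Finset.sum_congr rfl fun j _ => by rw [hc2 j]]
      omega
    have hcc := card_counts c hsum'
    rw [Fintype.card_fin] at hcc
    have hprod : ∏ v : ZMod k, (c v).factorial
        = (∏ j, (ν j).factorial) * At.factorial * Bt.factorial := by
      rw [zmod_prod_split hk (fun v => (c v).factorial), hc0, hc1]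
      rw [show (∏ j : Fin (k-2), (c (((j:ℕ)+2 : ℕ) : ZMod k)).factorial)
          = ∏ j, (ν j).factorial from
        Finset.prod_congr rfl fun j _ => by rw [hc2 j]]
      ring
    rw [summand, if_pos hAB, ← hAt, ← hBt]
    have hpos : 0 < (∏ j, (ν j).factorial) * At.factorial * Bt.factorial := by
      positivity
    symm
    refine Nat.div_eq_of_eq_mul_left hpos ?_
    rw [← hcc, hprod]
  · rw [summand, if_neg hAB]
    rw [Finset.card_eq_zero, Finset.filter_eq_empty_iff]
    intro h hmem
    simp only [mem_filter, mem_univ, true_and] at hmem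
    intro hPhi
    obtain ⟨h1A, h0B, _⟩ := key h hmem hPhi
    exact hAB ⟨by omega, by omega⟩

open scoped Classical in
lemma main_count (n k D : ℕ) [NeZero k] (hk : 2 ≤ k) :
    ((Finset.univ.filter
        (fun h : Fin (n+1) → ZMod k => ∃ j : ℕ, D = wt h + k * j)).card
      = ∑ i ∈ Finset.range (D+1),
          ∑ ν ∈ Fintype.piFinset (fun _ : Fin (k-2) => Finset.range (D+1)),
            summand n k D i ν) := by
  have hmem : ∀ h ∈ Finset.univ.filter
      (fun h : Fin (n+1) → ZMod k => ∃ j : ℕ, D = wt h + k * j),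
      Phi n k D h ∈ (Finset.range (D+1)) ×ˢ
        Fintype.piFinset (fun _ : Fin (k-2) => Finset.range (D+1)) := by
    intro h hh
    simp only [mem_filter, mem_univ, true_and] at hh
    obtain ⟨j, hj⟩ := hh
    have hwD : wt h ≤ D := by omega
    rw [Finset.mem_product]
    constructor
    · rw [Phi, Finset.mem_range]
      have := Nat.div_le_self (D - wt h) k
      simp only
      omega
    · rw [Fintype.mem_piFinset]
      intro j'
      rw [Finset.mem_range, Phi]
      simp only
      have hle : ((((j':ℕ)+2 : ℕ) : ZMod k)).val * cnt h (((j':ℕ)+2 : ℕ) : ZMod k) ≤ wt h := by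
        rw [wt_eq h]
        exact Finset.single_le_sum (f := fun v => v.val * cnt h v)
          (fun v _ => Nat.zero_le _) (mem_univ _)
      rw [val_cast_add_two] at hle
      have h2 : 2 * cnt h (((j':ℕ)+2 : ℕ) : ZMod k)
          ≤ ((j':ℕ)+2) * cnt h (((j':ℕ)+2 : ℕ) : ZMod k) :=
        Nat.mul_le_mul_right _ (by omega)
      omega
  rw [Finset.card_eq_sum_card_fiberwise hmem, Finset.sum_product]
  exact Finset.sum_congr rfl fun i _ => Finset.sum_congr rfl fun ν _ =>
    fiber_card n k D hk i ν

open scoped Classical in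
theorem stmt3 (n k d : ℕ) [NeZero k] (hn : 1 ≤ n) (hk : 2 ≤ k) (hd : 1 ≤ d)
    (D : ℕ) (hD : D = (k-1)*d) :
    ((Finset.univ.filter
        (fun h : Fin (n+1) → ZMod k => ∃ j : ℕ, D = wt h + k * j)).card
      = ∑ i ∈ Finset.range (D+1),
          ∑ ν ∈ Fintype.piFinset (fun _ : Fin (k-2) => Finset.range (D+1)),
            summand n k D i ν) ∧
    (k = 2 →
      (Finset.univ.filter
          (fun h : Fin (n+1) → ZMod 2 => ∃ j : ℕ, d = wt h + 2 * j)).card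
        = ∑ i ∈ Finset.range (d+1),
            if 2*i ≤ d then (n+1).choose (d - 2*i) else 0) := by
  constructor
  · exact main_count n k D hk
  · intro hk2
    subst hk2
    rw [main_count n 2 d (le_refl 2)]
    refine Finset.sum_congr rfl fun i _ => ?_
    have hpi : Fintype.piFinset (fun _ : Fin (2-2) => Finset.range (d+1))
        = {fun _ => 0} := by
      ext ν
      simp only [Fintype.mem_piFinset, Finset.mem_singleton]
      constructor
      · intro _
        funext j
        exact absurd j.isLt (by omega)
      · intro _ j
        exact absurd j.isLt (by omega)
    rw [hpi, Finset.sum_singleton]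
    haveI hie : IsEmpty (Fin (2-2)) := ⟨fun j => absurd j.isLt (by omega)⟩
    have hAv : Aval 2 d i (fun _ => 0) = (d:ℤ) - 2*i := by
      rw [Aval, Finset.univ_eq_empty, Finset.sum_empty]
      push_cast; ring
    have hBv : Bval n 2 d i (fun _ => 0) = (n:ℤ) + 1 - d + 2*i := by
      rw [Bval, Finset.univ_eq_empty, Finset.sum_empty]
      push_cast; ring
    rw [summand, hAv, hBv]
    rw [show (∏ j : Fin (2-2), ((fun _ => (0:ℕ)) j).factorial) = 1 by
      rw [Finset.univ_eq_empty, Finset.prod_empty]]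
    by_cases h1 : 2*i ≤ d
    · by_cases h2 : d - 2*i ≤ n+1
      · rw [if_pos ⟨by omega, by omega⟩, if_pos h1]
        rw [show ((d:ℤ) - 2*i).toNat = d - 2*i by omega,
            show ((n:ℤ) + 1 - (d:ℤ) + 2*i).toNat = (n+1) - (d - 2*i) by omega]
        rw [Nat.choose_eq_factorial_div_factorial (by omega), one_mul]
      · rw [if_neg (by rintro ⟨hA0, hB0⟩; omega), if_pos h1,
          Nat.choose_eq_zero_of_lt (by omega)]
    · rw [if_neg (by rintro ⟨hA0, hB0⟩; omega), if_neg h1]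
end

section
/- The C(n+d−1, n−1) polynomials ∏_{i=0}^{n−1} (x_i² − x_n²)^{a_i}, where (a₀,…,a_{n−1}) ranges over all vectors in ℕ^n with a₀ + … + a_{n−1} = d, are ℂ-linearly independent. -/
open MvPolynomial

theorem prod_X_pow_eq_monomial_equivFunOnFinite {R ι : Type*} [CommSemiring R] [Fintype ι]
    (m : ι → ℕ) :
    ∏ i, (X i : MvPolynomial ι R) ^ m i = monomial (Finsupp.equivFunOnFinite.symm m) 1 := by
  rw [← prod_X_pow_eq_monomial]
  exact (Finset.prod_subset (Finset.subset_univ _) fun i _ hi => by simp_all).symm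

theorem linearIndependent_prod_X_pow {R ι σ : Type*} [CommSemiring R] [Fintype ι]
    {e : ι → σ} (he : Function.Injective e) :
    LinearIndependent R fun m : ι → ℕ => ∏ i, (X (e i) : MvPolynomial σ R) ^ m i := by
  have hmonomials : LinearIndependent R fun m : ι → ℕ => ∏ i, (X i : MvPolynomial ι R) ^ m i := by
    simp_rw [prod_X_pow_eq_monomial_equivFunOnFinite]
    exact (basisMonomials ι R).linearIndependent.comp _ Finsupp.equivFunOnFinite.symm.injective
  have hrename : (fun m : ι → ℕ => ∏ i, (X (e i) : MvPolynomial σ R) ^ m i) =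
      (rename e).toLinearMap ∘ fun m => ∏ i, X i ^ m i := by
    ext1 m
    simp
  rw [hrename]
  exact hmonomials.map_injOn _ (rename_injective e he).injOn

theorem stmt14_general (n d : ℕ) :
    LinearIndependent ℂ
      (fun a : {a : Fin n → ℕ // ∑ i, a i = d} =>
        ∏ i : Fin n,
          (X (Fin.castSucc i) ^ 2 - X (Fin.last n) ^ 2 :
            MvPolynomial (Fin (n+1)) ℂ) ^ a.1 i) := by
  -- Setting `x_n = 0` sends the family to the distinct monomials `∏ x_i ^ (2 a_i)`.
  let φ : MvPolynomial (Fin (n+1)) ℂ →ₐ[ℂ] MvPolynomial (Fin (n+1)) ℂ :=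
    aeval (Fin.lastCases 0 fun i => X (Fin.castSucc i))
  have hdouble : Function.Injective fun a : {a : Fin n → ℕ // ∑ i, a i = d} => 2 • a.1 :=
    fun a b hab => Subtype.ext (smul_right_injective _ two_ne_zero hab)
  refine LinearIndependent.of_comp φ.toLinearMap ?_
  have hφ : φ.toLinearMap ∘ (fun a : {a : Fin n → ℕ // ∑ i, a i = d} =>
        ∏ i : Fin n, (X (Fin.castSucc i) ^ 2 - X (Fin.last n) ^ 2) ^ a.1 i) =
      (fun m : Fin n → ℕ => ∏ i, X (Fin.castSucc i) ^ m i) ∘ fun a => 2 • a.1 := by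
    ext1 a
    simp [φ, pow_mul]
  rw [hφ]
  exact (linearIndependent_prod_X_pow (Fin.castSucc_injective n)).comp _ hdouble

theorem stmt14 (n d : ℕ) (hn : 1 ≤ n) (hd : 1 ≤ d) :
    LinearIndependent ℂ
      (fun a : {a : Fin n → ℕ // ∑ i, a i = d} =>
        ∏ i : Fin n,
          (X (Fin.castSucc i) ^ 2 - X (Fin.last n) ^ 2 :
            MvPolynomial (Fin (n+1)) ℂ) ^ a.1 i) :=
  stmt14_general n d
end
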